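/- Fix a positive integer k and a partition λ contained in the m×n rectangle ⟨m^n⟩ (the partition with n parts equal to m). Then: (1) there are at most min{m,n} partitions μ such that λ∖μ is a k-ribbon; and (2) there are at most min{m,n} partitions μ contained in ⟨m^n⟩ such that μ∖λ is a k-ribbon. -/

import Mathlib

open scoped BigOperators
open MeasureTheory

noncomputable section

namespace RMT

attribute [local instance] Classical.propDecidable

/-! ### Sequences of complex numbers -/

/-- `e(X)`, the product of all elements of the sequence `X`. -/
def listProd (X : List ℂ) : ℂ := X.prod

/-- `-X`, the sequence of negatives. -/
def negL (X : List ℂ) : List ℂ := X.map (fun z => -z)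

/-- `X⁻¹`, the sequence of inverses. -/
def invL (X : List ℂ) : List ℂ := X.map (fun z => z⁻¹)

/-- `abs(X)`, the sequence of absolute values (as complex numbers). -/
def absL (X : List ℂ) : List ℂ := X.map (fun z => (‖z‖ : ℂ))

/-- `Δ(X; Y) = ∏_{x ∈ X, y ∈ Y} (x - y)`. -/
def pairDelta (X Y : List ℂ) : ℂ := (X.map (fun x => (Y.map (fun y => x - y)).prod)).prod

/-- The power sum `p_k(X) = ∑_{x ∈ X} x^k`. -/
def pSym (k : ℕ) (X : List ℂ) : ℂ := (X.map (fun z => z ^ k)).sum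

/-- `p_λ(X) = ∏_i p_{λ_i}(X)` for a multiset of parts. -/
def pMult (p : Multiset ℕ) (X : List ℂ) : ℂ := (p.map (fun k => pSym k X)).prod

/-- The complete homogeneous symmetric polynomial `h_k(X)`. -/
def hSym (k : ℕ) (X : List ℂ) : ℂ :=
  ∑ α ∈ (Finset.univ : Finset (Fin X.length → Fin (k + 1))).filter
      (fun α => (∑ i, ((α i : ℕ))) = k),
    ∏ i, X.get i ^ ((α i : ℕ))

/-- `h_k(X)` for integer `k`, vanishing for negative `k`. -/
def hSymZ (k : ℤ) (X : List ℂ) : ℂ := if 0 ≤ k then hSym k.toNat X else 0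

/-- The monomial symmetric polynomial `m_λ(X)`, where `λ` is given as the multiset of
its parts: the sum of `x_1^{α_1} ⋯ x_n^{α_n}` over all distinct rearrangements `α` of `λ`
(with zero parts removed) padded with zeros to length `n = l(X)`; it vanishes when `λ` has more
positive parts than `l(X)`. -/
def mSym (p : Multiset ℕ) (X : List ℂ) : ℂ :=
  ∑ α ∈ (Finset.univ : Finset (Fin X.length → Fin (p.sum + 1))).filter
      (fun α => (Finset.univ.val.map (fun i => ((α i : ℕ)))) =
        (p.filter (fun x => x ≠ 0)) +
          Multiset.replicate (X.length - (p.filter (fun x => x ≠ 0)).card) 0),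
    ∏ i, X.get i ^ ((α i : ℕ))

/-! ### Partitions, modelled as Young diagrams -/

/-- The multiset of (positive) parts of a partition. -/
def parts (l : YoungDiagram) : Multiset ℕ := (l.rowLens : Multiset ℕ)

/-- `l(λ)`, the number of positive parts. -/
def plen (l : YoungDiagram) : ℕ := l.colLen 0

/-- `|λ|`, the size of the partition. -/
def psize (l : YoungDiagram) : ℕ := l.cells.card

/-- `m_i(λ)`, the number of parts equal to `i`. -/
def multOf (l : YoungDiagram) (i : ℕ) : ℕ := (parts l).count i

/-- `z_λ = ∏_{i ≥ 1} i^{m_i(λ)} m_i(λ)!`. -/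
def zPart (l : YoungDiagram) : ℕ :=
  ∏ i ∈ (parts l).toFinset, i ^ multOf l i * (multOf l i).factorial

/-- The parts of `λ - ⟨1^{l(λ)}⟩`, i.e. of `λ` with 1 subtracted from every (positive) part. -/
def partsMinusOne (l : YoungDiagram) : Multiset ℕ := (parts l).map (fun a => a - 1)

/-- The Schur polynomial attached to a list of (integer) parts, via the Jacobi–Trudi
determinant; this is the polynomial extension of the bialternant `det(x_i^{λ_j+n-j})/Δ(X)`. -/
def schurL (p : List ℤ) (X : List ℂ) : ℂ :=
  Matrix.det (Matrix.of (fun i j : Fin p.length => hSymZ (p.get i + (j : ℤ) - (i : ℤ)) X))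

/-- The Schur polynomial `s_λ(X)` of a partition. -/
def schur (l : YoungDiagram) (X : List ℂ) : ℂ :=
  schurL (l.rowLens.map (fun a => (a : ℤ))) X

/-! ### Ribbons -/

/-- Two boxes are edgewise adjacent. -/
def adjCell (c d : ℕ × ℕ) : Prop :=
  (c.1 = d.1 ∧ (c.2 = d.2 + 1 ∨ d.2 = c.2 + 1)) ∨
    (c.2 = d.2 ∧ (c.1 = d.1 + 1 ∨ d.1 = c.1 + 1))

/-- A finite set of boxes is edgewise connected. -/
def ConnCells (s : Finset (ℕ × ℕ)) : Prop :=
  ∀ c ∈ s, ∀ d ∈ s, Relation.ReflTransGen (fun a b => a ∈ s ∧ b ∈ s ∧ adjCell a b) c d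

/-- `IsRibbon μ λ k` says that `μ ⊆ λ` and the skew diagram `λ ∖ μ` is a `k`-ribbon:
it has `k` boxes, is edgewise connected, and contains no 2×2 block of boxes.
(This is the relation written `μ →_k λ`.) -/
def IsRibbon (μ l : YoungDiagram) (k : ℕ) : Prop :=
  μ ≤ l ∧ (l.cells \ μ.cells).card = k ∧ ConnCells (l.cells \ μ.cells) ∧
    ¬ ∃ i j : ℕ, ((i, j) ∈ l.cells \ μ.cells ∧ (i + 1, j) ∈ l.cells \ μ.cells ∧
      (i, j + 1) ∈ l.cells \ μ.cells ∧ (i + 1, j + 1) ∈ l.cells \ μ.cells)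

/-- The height of the skew diagram `λ ∖ μ`: one less than the number of rows it occupies. -/
def ribbonHeight (μ l : YoungDiagram) : ℕ := ((l.cells \ μ.cells).image Prod.fst).card - 1

/-- The rectangular partition `⟨m^n⟩` (n rows of length m). -/
def rect (m n : ℕ) : YoungDiagram :=
  ⟨Finset.range n ×ˢ Finset.range m, by
    intro a b hba ha
    simp only [Finset.coe_product, Set.mem_prod, Finset.mem_coe, Finset.mem_range] at *
    exact ⟨lt_of_le_of_lt hba.1 ha.1, lt_of_le_of_lt hba.2 ha.2⟩⟩

/-- `HasMNIndex λ m n k` says that the `(m,n)`-index of the partition `λ` is `k`: `k` is the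
largest (possibly negative) integer with `k ≤ min{m,n}` such that the box `(m+1-k, n+1-k)`
(in the 1-indexed column/row coordinates of the paper, i.e. the 0-indexed cell
`(n-k, m-k)` in row/column coordinates) does not belong to `λ`. -/
def HasMNIndex (l : YoungDiagram) (m n : ℕ) (k : ℤ) : Prop :=
  (k ≤ min (m : ℤ) (n : ℤ) ∧ (((n : ℤ) - k).toNat, ((m : ℤ) - k).toNat) ∉ l.cells) ∧
    ∀ k' : ℤ, k' ≤ min (m : ℤ) (n : ℤ) →
      (((n : ℤ) - k').toNat, ((m : ℤ) - k').toNat) ∉ l.cells → k' ≤ k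

/-! ### The ring of symmetric functions, modelled as polynomials in the power sums -/

/-- The ring of symmetric functions over `ℂ`: since the power sums `p₁, p₂, …` are
algebraically independent generators, we model it as the polynomial ring in the
variables `p₁, p₂, …`, with variable `n : ℕ` denoting `p_{n+1}`. -/
abbrev Sym := MvPolynomial ℕ ℂ

/-- The power sum `p_k` (for `k ≥ 1`) as an element of `Sym`. -/
def pGen (k : ℕ) : Sym := MvPolynomial.X (k - 1)

/-- `p_λ = ∏_i p_{λ_i}` as an element of `Sym`. -/
def pMultF (p : Multiset ℕ) : Sym := (p.map pGen).prod

/-- `z_λ` for a multiset of parts. -/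
def zMult (p : Multiset ℕ) : ℕ := ∏ i ∈ p.toFinset, i ^ p.count i * (p.count i).factorial

/-- The complete homogeneous symmetric function `h_k = ∑_{|μ| = k} z_μ⁻¹ p_μ` in `Sym`. -/
def hF (k : ℕ) : Sym := ∑ μ : Nat.Partition k, ((zMult μ.parts : ℂ))⁻¹ • pMultF μ.parts

/-- `h_k` for integer `k`, vanishing for negative `k`. -/
def hFZ (k : ℤ) : Sym := if 0 ≤ k then hF k.toNat else 0

/-- The Schur function `s_λ` as an element of `Sym` (Jacobi–Trudi determinant). -/
def sF (l : YoungDiagram) : Sym :=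
  Matrix.det (Matrix.of (fun i j : Fin (plen l) =>
    hFZ ((l.rowLen (i : ℕ) : ℤ) + (j : ℤ) - (i : ℤ))))

/-- The weight `z` of a monomial in the power sums: for `α` with `α i` the exponent of
`p_{i+1}`, this is `∏_i (i+1)^{α i} (α i)!`, so that `⟨p_λ, p_μ⟩ = z_λ δ_{λμ}`. -/
def zExp (α : ℕ →₀ ℕ) : ℂ :=
  ∏ i ∈ α.support, ((i + 1 : ℕ) : ℂ) ^ (α i) * (Nat.factorial (α i))

/-- The Hall inner product on `Sym`, determined by `⟨p_λ, p_μ⟩ = z_λ δ_{λμ}`. -/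
def hallInner (f g : Sym) : ℂ :=
  ∑ α ∈ f.support, MvPolynomial.coeff α f * MvPolynomial.coeff α g * zExp α

/-- The Littlewood–Richardson coefficient `c^λ_{μν} = ⟨s_μ s_ν, s_λ⟩`. -/
def lrCoeff (μ ν l : YoungDiagram) : ℂ := hallInner (sF μ * sF ν) (sF l)

/-- The Littlewood–Schur function `LS_λ(X; Y) = ∑_{μ,ν} c^λ_{μν} s_μ(X) s_{ν'}(Y)`. -/
def LSfun (l : YoungDiagram) (X Y : List ℂ) : ℂ :=
  ∑ᶠ p : YoungDiagram × YoungDiagram, lrCoeff p.1 p.2 l * schur p.1 X * schur p.2.transpose Y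

/-- The derivation operator `∂/∂p_k` (for `k ≥ 1`) on `Sym`. -/
def pderivK (k : ℕ) (f : Sym) : Sym := MvPolynomial.pderiv (k - 1) f

/-- The composite derivation operator `∂/∂p_λ`. -/
def pderivMult (p : Multiset ℕ) (f : Sym) : Sym :=
  (Multiset.sort p (· ≤ ·)).foldr (fun k g => pderivK k g) f

/-- Evaluation (specialization) of a symmetric function at a finite sequence `X`:
the algebra homomorphism sending each `p_k` to `p_k(X)`. -/
def evalAt (X : List ℂ) : Sym →ₐ[ℂ] ℂ := MvPolynomial.aeval (fun i => pSym (i + 1) X)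

/-! ### The unitary group, Haar measure and characteristic polynomials -/

/-- The unitary group `U(N)`. -/
abbrev UG (N : ℕ) := Matrix.unitaryGroup (Fin N) ℂ

instance (N : ℕ) : MeasurableSpace (UG N) := borel _

/-- `μ` is the normalized (probability) Haar measure on `U(N)`. -/
def IsHaarProb {N : ℕ} (μ : Measure (UG N)) : Prop :=
  IsProbabilityMeasure μ ∧ ∀ g : UG N, Measure.map (fun x => g * x) μ = μ

/-- The characteristic polynomial `χ_g(z) = det(I - z g⁻¹)` of a unitary matrix. -/
def chi {N : ℕ} (g : UG N) (z : ℂ) : ℂ :=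
  Matrix.det ((1 : Matrix (Fin N) (Fin N) ℂ) - z • ((g⁻¹ : UG N) : Matrix (Fin N) (Fin N) ℂ))

/-- The derivative `χ'_g`. -/
def chiD {N : ℕ} (g : UG N) (z : ℂ) : ℂ := deriv (chi g) z

/-- `det(-g)`. -/
def detNeg {N : ℕ} (g : UG N) : ℂ := Matrix.det (-((g : Matrix (Fin N) (Fin N) ℂ)))

/-- The completed characteristic polynomial `Λ_g(z) = det(-g)^{1/2} z^{-N/2} χ_g(z)`,
using principal branches. -/
def Lam {N : ℕ} (g : UG N) (z : ℂ) : ℂ :=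
  detNeg g ^ ((1 : ℂ) / 2) * z ^ (-(N : ℂ) / 2) * chi g z

/-- The derivative `Λ'_g`. -/
def LamD {N : ℕ} (g : UG N) (z : ℂ) : ℂ := deriv (Lam g) z

/-- The multiset of eigenvalues of `g`, listed in some order. -/
def eigList {N : ℕ} (g : UG N) : List ℂ :=
  ((g : Matrix (Fin N) (Fin N) ℂ).charpoly.roots).toList

/-! ### Subsequences -/

/-- The subsequence of `L` consisting of the entries with index in `K` (in order). -/
def subAt (L : List ℂ) (K : Finset ℕ) : List ℂ :=
  (List.filter (fun i : Fin L.length => decide (i.val ∈ K)) (List.finRange L.length)).map L.get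

/-- The complementary subsequence of `subAt L K`. -/
def coAt (L : List ℂ) (K : Finset ℕ) : List ℂ :=
  (List.filter (fun i : Fin L.length => decide (i.val ∉ K)) (List.finRange L.length)).map L.get

/-!
If the ribbon `λ ∖ μ` occupies the rows `r, …, s`, then consecutive rows overlap in exactly one
column, `μ_i + 1 = λ_{i+1}` for `r ≤ i < s`, and summing row by row shows that `k` is the hook
length of the cell `(r, μ_s)` of `λ`: `k + μ_s + r = λ_r + s`. As `μ_i - i` strictly decreases,
the hook length pins down the bottom row once the top row is known, so a removable `k`-ribbon is
determined by its top row, and likewise an addable one by its bottom row. These rows index rows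
of the rectangle, which gives the bound `n`; transposing gives `m`.
-/

lemma mem_rect {m n : ℕ} {c : ℕ × ℕ} : c ∈ rect m n ↔ c.1 < n ∧ c.2 < m := by
  change c ∈ Finset.range n ×ˢ Finset.range m ↔ _
  rw [Finset.mem_product, Finset.mem_range, Finset.mem_range]

lemma rect_transpose (m n : ℕ) : (rect m n).transpose = rect n m := by
  ext ⟨i, j⟩
  simp only [YoungDiagram.mem_cells, YoungDiagram.mem_transpose, mem_rect, Prod.swap_prod_mk]
  exact and_comm

lemma mem_cells_sdiff {μ l : YoungDiagram} {i j : ℕ} :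
    (i, j) ∈ l.cells \ μ.cells ↔ μ.rowLen i ≤ j ∧ j < l.rowLen i := by
  simp only [Finset.mem_sdiff, YoungDiagram.mem_cells, YoungDiagram.mem_iff_lt_rowLen]
  omega

lemma rowLen_mono {μ l : YoungDiagram} (h : μ ≤ l) (i : ℕ) : μ.rowLen i ≤ l.rowLen i := by
  by_contra! hlt
  exact (YoungDiagram.mem_iff_lt_rowLen.1 (h (YoungDiagram.mem_iff_lt_rowLen.2 hlt))).false

lemma eq_of_rowLen_eq {μ ν : YoungDiagram} (h : ∀ i, μ.rowLen i = ν.rowLen i) : μ = ν := by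
  ext ⟨i, j⟩
  simp only [YoungDiagram.mem_cells, YoungDiagram.mem_iff_lt_rowLen, h]

lemma exists_vertical_step {S : Finset (ℕ × ℕ)} {c d : ℕ × ℕ}
    (hp : Relation.ReflTransGen (fun a b => a ∈ S ∧ b ∈ S ∧ adjCell a b) c d) {i : ℕ}
    (hc : i < c.1) (hd : d.1 ≤ i) : ∃ j, (i, j) ∈ S ∧ (i + 1, j) ∈ S := by
  induction hp with
  | refl => omega
  | @tail b e _ hstep ih =>
    obtain ⟨hb, he, hbe⟩ := hstep
    by_cases hbi : b.1 ≤ i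
    · exact ih hbi
    obtain ⟨b1, b2⟩ := b
    obtain ⟨e1, e2⟩ := e
    obtain ⟨rfl, rfl, rfl⟩ : b1 = i + 1 ∧ e1 = i ∧ b2 = e2 := by
      simp only [adjCell] at hbe hbi hd
      omega
    exact ⟨b2, he, hb⟩

lemma rowLen_succ_le_of_no_square {μ l : YoungDiagram}
    (hsq : ¬ ∃ i j : ℕ, ((i, j) ∈ l.cells \ μ.cells ∧ (i + 1, j) ∈ l.cells \ μ.cells ∧
      (i, j + 1) ∈ l.cells \ μ.cells ∧ (i + 1, j + 1) ∈ l.cells \ μ.cells)) (i : ℕ) :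
    l.rowLen (i + 1) ≤ μ.rowLen i + 1 := by
  by_contra! h
  have hl := l.rowLen_anti i (i + 1) i.le_succ
  have hμ := μ.rowLen_anti i (i + 1) i.le_succ
  exact hsq ⟨i, μ.rowLen i, by simp only [mem_cells_sdiff]; omega⟩

lemma card_cells_sdiff_eq_sum {μ l : YoungDiagram} {r s : ℕ}
    (hrows : ∀ c ∈ l.cells \ μ.cells, r ≤ c.1 ∧ c.1 ≤ s) :
    (l.cells \ μ.cells).card = ∑ i ∈ Finset.Icc r s, (l.rowLen i - μ.rowLen i) := by
  rw [Finset.card_eq_sum_card_fiberwise fun c hc => Finset.mem_Icc.2 (hrows c hc)]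
  refine Finset.sum_congr rfl fun i _ => ?_
  have hrow : {c ∈ l.cells \ μ.cells | c.1 = i} =
      {i} ×ˢ Finset.Ico (μ.rowLen i) (l.rowLen i) := by
    ext ⟨a, b⟩
    simp only [Finset.mem_filter, mem_cells_sdiff, Finset.mem_product, Finset.mem_singleton,
      Finset.mem_Ico]
    grind
  rw [hrow, Finset.card_product, Finset.card_singleton, Nat.card_Ico, one_mul]

lemma sum_sub_rowLen_add_eq {μ l : YoungDiagram} {r s : ℕ} (hrs : r ≤ s) (hle : μ ≤ l)
    (hstep : ∀ i, r ≤ i → i < s → μ.rowLen i + 1 = l.rowLen (i + 1)) :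
    ∑ i ∈ Finset.Icc r s, (l.rowLen i - μ.rowLen i) + μ.rowLen s + r = l.rowLen r + s := by
  induction s, hrs using Nat.le_induction with
  | base =>
    have := rowLen_mono hle r
    rw [Finset.Icc_self, Finset.sum_singleton]
    omega
  | succ s hrs ih =>
    have hs := ih fun i hri his => hstep i hri (by omega)
    have hstep_s := hstep s hrs s.lt_succ_self
    have hle_s := rowLen_mono hle (s + 1)
    rw [Finset.sum_Icc_succ_top (by omega)]
    omega

structure RibbonRows (μ l : YoungDiagram) (k r s : ℕ) : Prop where
  le : r ≤ s
  rowLen_lt : ∀ i, r ≤ i → i ≤ s → μ.rowLen i < l.rowLen i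
  rowLen_eq : ∀ i, i < r ∨ s < i → μ.rowLen i = l.rowLen i
  rowLen_add_one : ∀ i, r ≤ i → i < s → μ.rowLen i + 1 = l.rowLen (i + 1)
  /-- `k` is the hook length of the cell `(r, μ_s)` of `λ`. -/
  hook : k + μ.rowLen s + r = l.rowLen r + s

lemma IsRibbon.exists_ribbonRows {μ l : YoungDiagram} {k : ℕ} (hk : 0 < k)
    (h : IsRibbon μ l k) : ∃ r s, RibbonRows μ l k r s := by
  obtain ⟨hle, hcard, hconn, hsq⟩ := h
  set S := l.cells \ μ.cells
  have hne : (S.image Prod.fst).Nonempty := (Finset.card_pos.1 (hcard ▸ hk)).image _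
  set r := (S.image Prod.fst).min' hne
  set s := (S.image Prod.fst).max' hne
  have hrows : ∀ c ∈ S, r ≤ c.1 ∧ c.1 ≤ s := fun c hc =>
    ⟨Finset.min'_le _ _ (Finset.mem_image_of_mem _ hc),
      Finset.le_max' _ _ (Finset.mem_image_of_mem _ hc)⟩
  obtain ⟨cr, hcr, hcr1⟩ := Finset.mem_image.1 (Finset.min'_mem _ hne)
  obtain ⟨cs, hcs, hcs1⟩ := Finset.mem_image.1 (Finset.max'_mem _ hne)
  have hrs : r ≤ s := (hrows cr hcr).2.trans' hcr1.ge
  -- a path inside `S` from the bottom row to the top row steps up through every row between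
  have hcross : ∀ i, r ≤ i → i < s → ∃ j, (i, j) ∈ S ∧ (i + 1, j) ∈ S := fun i hri his =>
    exists_vertical_step (hconn cs hcs cr hcr) (by omega) (by omega)
  have hlt : ∀ i, r ≤ i → i ≤ s → μ.rowLen i < l.rowLen i := by
    intro i hri his
    obtain ⟨j, hj⟩ : ∃ j, (i, j) ∈ S := by
      rcases his.lt_or_eq with his | rfl
      · obtain ⟨j, hj, -⟩ := hcross i hri his
        exact ⟨j, hj⟩
      · exact ⟨cs.2, by rw [show s = cs.1 from hcs1.symm]; exact hcs⟩
    rw [mem_cells_sdiff] at hj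
    omega
  have hadd : ∀ i, r ≤ i → i < s → μ.rowLen i + 1 = l.rowLen (i + 1) := by
    intro i hri his
    obtain ⟨j, hj, hj'⟩ := hcross i hri his
    rw [mem_cells_sdiff] at hj hj'
    have := rowLen_succ_le_of_no_square hsq i
    omega
  refine ⟨r, s, hrs, hlt, fun i hi => (rowLen_mono hle i).antisymm ?_, hadd, ?_⟩
  · by_contra! hμl
    have := hrows _ (mem_cells_sdiff.2 ⟨le_rfl, hμl⟩)
    omega
  · have := sum_sub_rowLen_add_eq hrs hle hadd
    rw [← hcard, card_cells_sdiff_eq_sum hrows]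
    omega

def topRow (μ l : YoungDiagram) : ℕ := sInf {i | μ.rowLen i < l.rowLen i}

def botRow (μ l : YoungDiagram) : ℕ := sSup {i | μ.rowLen i < l.rowLen i}

namespace RibbonRows

variable {μ l μ₁ μ₂ : YoungDiagram} {k r s r₁ r₂ s₁ s₂ : ℕ}

lemma topRow_eq (h : RibbonRows μ l k r s) : topRow μ l = r := by
  refine IsLeast.csInf_eq ⟨h.rowLen_lt r le_rfl h.le, fun i hi => ?_⟩
  by_contra! hir
  have := h.rowLen_eq i (Or.inl hir)
  have hi : μ.rowLen i < l.rowLen i := hi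
  omega

lemma botRow_eq (h : RibbonRows μ l k r s) : botRow μ l = s := by
  refine IsGreatest.csSup_eq ⟨h.rowLen_lt s h.le le_rfl, fun i hi => ?_⟩
  by_contra! hsi
  have := h.rowLen_eq i (Or.inr hsi)
  have hi : μ.rowLen i < l.rowLen i := hi
  omega

lemma eq_of_topRow (h₁ : RibbonRows μ₁ l k r s₁) (h₂ : RibbonRows μ₂ l k r s₂) : μ₁ = μ₂ := by
  wlog hs : s₁ ≤ s₂ generalizing μ₁ μ₂ s₁ s₂
  · exact (this h₂ h₁ (by omega)).symm
  have hook₁ := h₁.hook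
  have hook₂ := h₂.hook
  -- else, writing `μ i` for row lengths: `μ₁ s₁ - s₁ = μ₂ s₂ - s₂ < μ₂ s₁ - s₁ < μ₁ s₁ - s₁`
  obtain rfl : s₁ = s₂ := by
    by_contra hne
    have hlt : s₁ < s₂ := by omega
    have := h₁.rowLen_eq (s₁ + 1) (Or.inr s₁.lt_succ_self)
    have := h₂.rowLen_add_one s₁ h₁.le hlt
    have := μ₁.rowLen_anti s₁ (s₁ + 1) s₁.le_succ
    have := μ₂.rowLen_anti s₁ s₂ hs
    omega
  refine eq_of_rowLen_eq fun i => ?_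
  by_cases hout : i < r ∨ s₁ < i
  · rw [h₁.rowLen_eq i hout, h₂.rowLen_eq i hout]
  rcases (show i < s₁ ∨ i = s₁ by omega) with hi | rfl
  · have := h₁.rowLen_add_one i (by omega) hi
    have := h₂.rowLen_add_one i (by omega) hi
    omega
  · omega

lemma eq_of_botRow (h₁ : RibbonRows l μ₁ k r₁ s) (h₂ : RibbonRows l μ₂ k r₂ s) : μ₁ = μ₂ := by
  wlog hr : r₁ ≤ r₂ generalizing μ₁ μ₂ r₁ r₂
  · exact (this h₂ h₁ (by omega)).symm
  have hook₁ := h₁.hook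
  have hook₂ := h₂.hook
  obtain rfl : r₁ = r₂ := by
    by_contra hne
    obtain ⟨q, rfl⟩ : ∃ q, r₂ = q + 1 := ⟨r₂ - 1, by omega⟩
    have := h₂.rowLen_eq q (Or.inl q.lt_succ_self)
    have := h₁.rowLen_add_one q (by omega) (by have := h₂.le; omega)
    have := μ₂.rowLen_anti q (q + 1) q.le_succ
    have := μ₁.rowLen_anti r₁ (q + 1) hr
    omega
  refine eq_of_rowLen_eq fun i => ?_
  by_cases hout : i < r₁ ∨ s < i
  · rw [← h₁.rowLen_eq i hout, ← h₂.rowLen_eq i hout]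
  rcases (show r₁ = i ∨ r₁ < i by omega) with rfl | hi
  · omega
  · obtain ⟨q, rfl⟩ : ∃ q, i = q + 1 := ⟨i - 1, by omega⟩
    have := h₁.rowLen_add_one q (by omega) (by omega)
    have := h₂.rowLen_add_one q (by omega) (by omega)
    omega

end RibbonRows

lemma cells_sdiff_transpose (μ l : YoungDiagram) :
    l.transpose.cells \ μ.transpose.cells =
      (l.cells \ μ.cells).map (Equiv.prodComm ℕ ℕ).toEmbedding := by
  ext c
  simp only [Finset.mem_map_equiv, Finset.mem_sdiff, YoungDiagram.mem_cells,
    YoungDiagram.mem_transpose, Equiv.prodComm_symm, Equiv.prodComm_apply]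

lemma IsRibbon.transpose {μ l : YoungDiagram} {k : ℕ} (h : IsRibbon μ l k) :
    IsRibbon μ.transpose l.transpose k := by
  obtain ⟨hle, hcard, hconn, hsq⟩ := h
  have mem_swap {x : ℕ × ℕ} (hx : x ∈ l.cells \ μ.cells) :
      x.swap ∈ (l.cells \ μ.cells).map (Equiv.prodComm ℕ ℕ).toEmbedding := by
    simpa using hx
  refine ⟨YoungDiagram.transpose_mono hle, ?_, ?_, ?_⟩ <;> rw [cells_sdiff_transpose]
  · rwa [Finset.card_map]
  · intro c hc d hd
    rw [Finset.mem_map_equiv] at hc hd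
    have := (hconn _ hc _ hd).lift
      (p := fun a b => a ∈ (l.cells \ μ.cells).map (Equiv.prodComm ℕ ℕ).toEmbedding ∧
        b ∈ (l.cells \ μ.cells).map (Equiv.prodComm ℕ ℕ).toEmbedding ∧ adjCell a b)
      Prod.swap fun x y ⟨hx, hy, hxy⟩ => ⟨mem_swap hx, mem_swap hy, Or.symm hxy⟩
    simpa only [Function.onFun, Equiv.prodComm_symm, Equiv.prodComm_apply, Prod.swap_swap]
      using this
  · rintro ⟨i, j, h1, h2, h3, h4⟩
    simp only [Finset.mem_map_equiv, Equiv.prodComm_symm, Equiv.prodComm_apply,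
      Prod.swap_prod_mk] at h1 h2 h3 h4
    exact hsq ⟨j, i, h1, h3, h2, h4⟩

lemma finite_and_ncard_le_of_injOn {α β : Type*} {s : Set α} {t : Set β} {f : α → β}
    (hm : Set.MapsTo f s t) (hi : Set.InjOn f s) (ht : t.Finite) :
    s.Finite ∧ s.ncard ≤ t.ncard :=
  ⟨ht.of_injOn hm hi, Set.ncard_le_ncard_of_injOn f hm hi ht⟩

lemma removable_finite_and_ncard_le_rows {k m n : ℕ} (hk : 0 < k) {l : YoungDiagram}
    (hl : l ≤ rect m n) : {μ | IsRibbon μ l k}.Finite ∧ {μ | IsRibbon μ l k}.ncard ≤ n := by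
  have hmaps : Set.MapsTo (topRow · l) {μ | IsRibbon μ l k} (Set.Iio n) := by
    intro μ hμ
    obtain ⟨r, s, h⟩ := IsRibbon.exists_ribbonRows hk hμ
    show topRow μ l < n
    rw [h.topRow_eq]
    exact (mem_rect.1 (hl (YoungDiagram.mem_iff_lt_rowLen.2 (h.rowLen_lt r le_rfl h.le)))).1
  have hinj : Set.InjOn (topRow · l) {μ | IsRibbon μ l k} := by
    intro μ₁ hμ₁ μ₂ hμ₂ heq
    obtain ⟨r₁, s₁, h₁⟩ := IsRibbon.exists_ribbonRows hk hμ₁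
    obtain ⟨r₂, s₂, h₂⟩ := IsRibbon.exists_ribbonRows hk hμ₂
    obtain rfl : r₁ = r₂ := h₁.topRow_eq.symm.trans (heq.trans h₂.topRow_eq)
    exact h₁.eq_of_topRow h₂
  obtain ⟨hfin, hcard⟩ := finite_and_ncard_le_of_injOn hmaps hinj (Set.finite_Iio n)
  exact ⟨hfin, hcard.trans_eq (Set.ncard_Iio_nat n)⟩

lemma removable_finite_and_ncard_le {k m n : ℕ} (hk : 0 < k) {l : YoungDiagram}
    (hl : l ≤ rect m n) :
    {μ | IsRibbon μ l k}.Finite ∧ {μ | IsRibbon μ l k}.ncard ≤ min m n := by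
  obtain ⟨hfin, hn⟩ := removable_finite_and_ncard_le_rows hk hl
  obtain ⟨hfinT, hm⟩ := removable_finite_and_ncard_le_rows hk
    (rect_transpose m n ▸ YoungDiagram.transpose_mono hl)
  have hT := finite_and_ncard_le_of_injOn (f := YoungDiagram.transpose)
    (fun _ hμ => IsRibbon.transpose hμ) (fun _ _ _ _ => YoungDiagram.transpose_eq_iff.1) hfinT
  exact ⟨hfin, le_min (hT.2.trans hm) hn⟩

lemma addable_finite_and_ncard_le_rows {k m n : ℕ} (hk : 0 < k) (l : YoungDiagram) :
    {μ | IsRibbon l μ k ∧ μ ≤ rect m n}.Finite ∧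
      {μ | IsRibbon l μ k ∧ μ ≤ rect m n}.ncard ≤ n := by
  have hmaps : Set.MapsTo (botRow l ·) {μ | IsRibbon l μ k ∧ μ ≤ rect m n} (Set.Iio n) := by
    rintro μ ⟨hμ, hμr⟩
    obtain ⟨r, s, h⟩ := IsRibbon.exists_ribbonRows hk hμ
    show botRow l μ < n
    rw [h.botRow_eq]
    exact (mem_rect.1 (hμr (YoungDiagram.mem_iff_lt_rowLen.2 (h.rowLen_lt s h.le le_rfl)))).1
  have hinj : Set.InjOn (botRow l ·) {μ | IsRibbon l μ k ∧ μ ≤ rect m n} := by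
    intro μ₁ hμ₁ μ₂ hμ₂ heq
    obtain ⟨r₁, s₁, h₁⟩ := IsRibbon.exists_ribbonRows hk hμ₁.1
    obtain ⟨r₂, s₂, h₂⟩ := IsRibbon.exists_ribbonRows hk hμ₂.1
    obtain rfl : s₁ = s₂ := h₁.botRow_eq.symm.trans (heq.trans h₂.botRow_eq)
    exact h₁.eq_of_botRow h₂
  obtain ⟨hfin, hcard⟩ := finite_and_ncard_le_of_injOn hmaps hinj (Set.finite_Iio n)
  exact ⟨hfin, hcard.trans_eq (Set.ncard_Iio_nat n)⟩

lemma addable_finite_and_ncard_le {k : ℕ} (hk : 0 < k) (m n : ℕ) (l : YoungDiagram) :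
    {μ | IsRibbon l μ k ∧ μ ≤ rect m n}.Finite ∧
      {μ | IsRibbon l μ k ∧ μ ≤ rect m n}.ncard ≤ min m n := by
  obtain ⟨hfin, hn⟩ := addable_finite_and_ncard_le_rows (m := m) (n := n) hk l
  obtain ⟨hfinT, hm⟩ := addable_finite_and_ncard_le_rows (m := n) (n := m) hk l.transpose
  have hmapsT : Set.MapsTo YoungDiagram.transpose {μ | IsRibbon l μ k ∧ μ ≤ rect m n}
      {μ | IsRibbon l.transpose μ k ∧ μ ≤ rect n m} := fun _ hμ =>
    ⟨hμ.1.transpose, rect_transpose m n ▸ YoungDiagram.transpose_mono hμ.2⟩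
  have hT := finite_and_ncard_le_of_injOn hmapsT
    (fun _ _ _ _ => YoungDiagram.transpose_eq_iff.1) hfinT
  exact ⟨hfin, le_min (hT.2.trans hm) hn⟩

/-- **Lemma 4.1**: for a partition `λ ⊆ ⟨m^n⟩` there are at most `min{m,n}` partitions `μ`
such that `λ∖μ` is a `k`-ribbon, and at most `min{m,n}` partitions `μ ⊆ ⟨m^n⟩` such that
`μ∖λ` is a `k`-ribbon. -/
theorem ribbon_count (k : ℕ) (hk : 0 < k) (m n : ℕ) (l : YoungDiagram)
    (hl : l ≤ rect m n) :
    ({μ : YoungDiagram | IsRibbon μ l k}.Finite ∧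
      {μ : YoungDiagram | IsRibbon μ l k}.ncard ≤ min m n) ∧
    ({μ : YoungDiagram | IsRibbon l μ k ∧ μ ≤ rect m n}.Finite ∧
      {μ : YoungDiagram | IsRibbon l μ k ∧ μ ≤ rect m n}.ncard ≤ min m n) :=
  ⟨removable_finite_and_ncard_le hk hl, addable_finite_and_ncard_le hk m n l⟩

end RMT
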